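/- (Functional Representation Lemma) For any pair of random variables (X, Y) with X supported on a finite alphabet 𝒳 and Y on a finite alphabet 𝒴, there exists a random variable U (on a possibly enlarged probability space) such that U is independent of X, Y is a deterministic function of (U, X) (i.e., H(Y | U, X) = 0), and the alphabet of U can be taken of size at most |𝒳|(|𝒴| − 1) + 1. -/

import Mathlib

open scoped BigOperators Classical

noncomputable section

/-- Probability of an event under a pmf `p` on a finite sample space. -/
def prE {Ω : Type*} [Fintype Ω] (p : Ω → ℝ) (E : Ω → Prop) : ℝ :=
  ∑ ω, if E ω then p ω else 0

/-- `p` is a probability mass function. -/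
def IsPMF {Ω : Type*} [Fintype Ω] (p : Ω → ℝ) : Prop :=
  (∀ ω, 0 ≤ p ω) ∧ ∑ ω, p ω = 1

/-- P(X = a). -/
def pr {Ω α : Type*} [Fintype Ω] (p : Ω → ℝ) (X : Ω → α) (a : α) : ℝ :=
  prE p (fun ω => X ω = a)

/-- Shannon entropy in bits. -/
def ent {Ω α : Type*} [Fintype Ω] [Fintype α] (p : Ω → ℝ) (X : Ω → α) : ℝ :=
  -∑ a, pr p X a * Real.logb 2 (pr p X a)

/-- Conditional entropy H(Y | X) = H(X,Y) - H(X). -/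
def condEnt {Ω α β : Type*} [Fintype Ω] [Fintype α] [Fintype β]
    (p : Ω → ℝ) (Y : Ω → β) (X : Ω → α) : ℝ :=
  ent p (fun ω => (X ω, Y ω)) - ent p X

/-- Mutual information I(X; Y). -/
def mi {Ω α β : Type*} [Fintype Ω] [Fintype α] [Fintype β]
    (p : Ω → ℝ) (X : Ω → α) (Y : Ω → β) : ℝ :=
  ent p X + ent p Y - ent p (fun ω => (X ω, Y ω))

/-- Conditional mutual information I(X; Y | Z). -/
def cmi {Ω α β γ : Type*} [Fintype Ω] [Fintype α] [Fintype β] [Fintype γ]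
    (p : Ω → ℝ) (X : Ω → α) (Y : Ω → β) (Z : Ω → γ) : ℝ :=
  ent p (fun ω => (X ω, Z ω)) + ent p (fun ω => (Y ω, Z ω))
    - ent p (fun ω => (X ω, Y ω, Z ω)) - ent p Z

/-- Independence of two random variables. -/
def IndepRV {Ω α β : Type*} [Fintype Ω] (p : Ω → ℝ) (X : Ω → α) (Y : Ω → β) : Prop :=
  ∀ a b, prE p (fun ω => X ω = a ∧ Y ω = b) = pr p X a * pr p Y b

/-- X is uniformly distributed on its (finite) alphabet. -/
def IsUniform {Ω α : Type*} [Fintype Ω] [Fintype α] (p : Ω → ℝ) (X : Ω → α) : Prop :=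
  ∀ a, pr p X a = 1 / (Fintype.card α : ℝ)

/-- Entropy of Y conditioned on the event E (e.g. {X = x}). -/
def entCondOn {Ω β : Type*} [Fintype Ω] [Fintype β] (p : Ω → ℝ) (Y : Ω → β)
    (E : Ω → Prop) : ℝ :=
  -∑ b, (prE p (fun ω => Y ω = b ∧ E ω) / prE p E) *
      Real.logb 2 (prE p (fun ω => Y ω = b ∧ E ω) / prE p E)

/-- PMF conditioned on the event E. -/
def pCond {Ω : Type*} [Fintype Ω] (p : Ω → ℝ) (E : Ω → Prop) (ω : Ω) : ℝ :=
  if E ω then p ω / prE p E else 0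

/-!
It suffices to realise the conditional laws `r x` of `Y` given `X = x` simultaneously as the laws
of `f U x` for a single `U`, and then to take `U` independent of `X` and `Y = f U X`. A family of
laws `r` is a point of `∏ₓ Δ(β)`, the convex hull of the deterministic kernels `x ↦ δ (v x)` for
`v : α → β`. These all have row sums `1`, so they lie in an affine subspace of dimension
`|α| (|β| - 1)`, and by Carathéodory `r` is a convex combination of at most `|α| (|β| - 1) + 1` of
them; the weights of that combination are the law of `U`.
-/

open Module

theorem exists_fin_convexCombination_of_mem_convexHull {E : Type*} [AddCommGroup E]
    [Module ℝ E] [FiniteDimensional ℝ E] {s : Set E} {x : E} (hx : x ∈ convexHull ℝ s) :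
    ∃ (m : ℕ) (w : Fin m → ℝ) (z : Fin m → E), m ≤ finrank ℝ (vectorSpan ℝ s) + 1 ∧
      (∀ i, z i ∈ s) ∧ (∀ i, 0 ≤ w i) ∧ ∑ i, w i = 1 ∧ ∑ i, w i • z i = x := by
  obtain ⟨ι, _, z, w, hzs, hz, hw, hw1, hwz⟩ := eq_pos_convex_span_of_mem_convexHull hx
  let e := (Fintype.equivFin ι).symm
  refine ⟨Fintype.card ι, w ∘ e, z ∘ e, ?_, fun i => hzs ⟨_, rfl⟩, fun i => (hw _).le,
    (e.sum_comp w).trans hw1, (e.sum_comp fun i => w i • z i).trans hwz⟩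
  exact hz.card_le_finrank_succ.trans
    (Nat.add_le_add_right (Submodule.finrank_mono (vectorSpan_mono ℝ hzs)) 1)

theorem vectorSpan_le_ker_of_forall_eq {E F : Type*} [AddCommGroup E] [Module ℝ E] [AddCommGroup F]
    [Module ℝ F] (f : E →ₗ[ℝ] F) {s : Set E} {c : F} (hf : ∀ a ∈ s, f a = c) :
    vectorSpan ℝ s ≤ LinearMap.ker f := by
  rw [vectorSpan_def, Submodule.span_le]
  rintro _ ⟨a, ha, b, hb, rfl⟩
  simp [hf a ha, hf b hb]

def rowSum (α β : Type*) [Fintype β] : (α → β → ℝ) →ₗ[ℝ] (α → ℝ) where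
  toFun w x := ∑ y, w x y
  map_add' v w := by ext; simp [Finset.sum_add_distrib]
  map_smul' c w := by ext; simp [Finset.mul_sum]

theorem finrank_ker_rowSum (α β : Type*) [Fintype α] [Fintype β] [Nonempty β] :
    finrank ℝ (LinearMap.ker (rowSum α β)) = Fintype.card α * (Fintype.card β - 1) := by
  obtain ⟨y₀⟩ := ‹Nonempty β›
  have hsurj : Function.Surjective (rowSum α β) := fun v =>
    ⟨fun x y => if y = y₀ then v x else 0, by ext; simp [rowSum]⟩
  have := LinearMap.finrank_range_add_finrank_ker (rowSum α β)
  rw [LinearMap.range_eq_top.2 hsurj, finrank_top, finrank_fintype_fun_eq_card,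
    finrank_pi_fintype] at this
  simp only [Finset.sum_const, Finset.card_univ, smul_eq_mul, finrank_fintype_fun_eq_card] at this
  rw [Nat.mul_sub_one]
  omega

theorem exists_common_pushforward_of_mem_stdSimplex {α β : Type*} [Fintype α] [Fintype β]
    [Nonempty β] (r : α → β → ℝ) (hr : ∀ x, r x ∈ stdSimplex ℝ β) :
    ∃ (m : ℕ) (ν : Fin m → ℝ) (f : Fin m → α → β), IsPMF ν ∧ (∀ x y, pr ν (f · x) y = r x y) ∧
      m ≤ Fintype.card α * (Fintype.card β - 1) + 1 := by
  set s : Set (α → β → ℝ) :=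
    Set.univ.pi fun _ => Set.range fun y y' : β => if y = y' then 1 else 0
  have hrs : r ∈ convexHull ℝ s := by
    rw [convexHull_pi, convexHull_basis_eq_stdSimplex]
    exact fun x _ => hr x
  have hs : vectorSpan ℝ s ≤ LinearMap.ker (rowSum α β) := by
    refine vectorSpan_le_ker_of_forall_eq _ (c := 1) fun z hz => funext fun x => ?_
    obtain ⟨y, hy⟩ := hz x trivial
    simp [rowSum, ← hy]
  obtain ⟨m, ν, z, hm, hzs, hν0, hν1, hνz⟩ := exists_fin_convexCombination_of_mem_convexHull hrs
  choose f hf using fun u x => hzs u x trivial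
  refine ⟨m, ν, f, ⟨hν0, hν1⟩, fun x y => ?_, ?_⟩
  · rw [← hνz]
    simp [pr, prE, Finset.sum_apply, ← hf]
  · calc m ≤ finrank ℝ (vectorSpan ℝ s) + 1 := hm
      _ ≤ finrank ℝ (LinearMap.ker (rowSum α β)) + 1 := by gcongr; exact Submodule.finrank_mono hs
      _ = _ := by rw [finrank_ker_rowSum]

section Probability

variable {Ω : Type*} [Fintype Ω]

theorem IsPMF.nonempty {p : Ω → ℝ} (hp : IsPMF p) : Nonempty Ω := by
  by_contra h
  simpa [not_nonempty_iff.1 h] using hp.2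

theorem prE_nonneg {p : Ω → ℝ} (hp : ∀ ω, 0 ≤ p ω) (E : Ω → Prop) : 0 ≤ prE p E :=
  Finset.sum_nonneg fun ω _ => by split_ifs <;> simp [hp ω]

theorem pr_nonneg {α : Type*} {p : Ω → ℝ} (hp : ∀ ω, 0 ≤ p ω) (X : Ω → α) (a : α) :
    0 ≤ pr p X a :=
  prE_nonneg hp _

theorem prE_congr (p : Ω → ℝ) {E F : Ω → Prop} (h : ∀ ω, E ω ↔ F ω) : prE p E = prE p F := by
  simp only [prE, h]

theorem prE_eq_apply (p : Ω → ℝ) (a : Ω) : prE p (fun ω => ω = a) = p a := by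
  simp [prE]

theorem prE_true (p : Ω → ℝ) : prE p (fun _ => True) = ∑ ω, p ω := by
  simp [prE]

theorem sum_prE_and (p : Ω → ℝ) (E : Ω → Prop) {β : Type*} [Fintype β] (Y : Ω → β) :
    ∑ b, prE p (fun ω => E ω ∧ Y ω = b) = prE p E := by
  unfold prE
  rw [Finset.sum_comm]
  refine Finset.sum_congr rfl fun ω _ => ?_
  by_cases hE : E ω <;> simp [hE]

theorem sum_pr {α : Type*} [Fintype α] (p : Ω → ℝ) (X : Ω → α) :
    ∑ a, pr p X a = ∑ ω, p ω := by
  simpa [pr, prE_true] using sum_prE_and p (fun _ => True) X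

theorem sum_pr_prodMk {α β : Type*} [Fintype β] (p : Ω → ℝ) (X : Ω → α) (Y : Ω → β) (x : α) :
    ∑ y, pr p (fun ω => (X ω, Y ω)) (x, y) = pr p X x := by
  simpa [pr] using sum_prE_and p (fun ω => X ω = x) Y

theorem IsPMF.pr {α : Type*} [Fintype α] {p : Ω → ℝ} (hp : IsPMF p) (X : Ω → α) :
    IsPMF (pr p X) :=
  ⟨pr_nonneg hp.1 X, (sum_pr p X).trans hp.2⟩

theorem exists_condDistrib {α β : Type*} [Fintype α] [Fintype β] [Nonempty β] {p : Ω → ℝ}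
    (hp : ∀ ω, 0 ≤ p ω) (X : Ω → α) (Y : Ω → β) :
    ∃ r : α → β → ℝ, (∀ x, r x ∈ stdSimplex ℝ β) ∧
      ∀ x y, pr p (fun ω => (X ω, Y ω)) (x, y) = pr p X x * r x y := by
  obtain ⟨y₀⟩ := ‹Nonempty β›
  refine ⟨fun x y => if pr p X x = 0 then (if y₀ = y then 1 else 0)
    else pr p (fun ω => (X ω, Y ω)) (x, y) / pr p X x, fun x => ?_, fun x y => ?_⟩
  · by_cases hx : pr p X x = 0
    · simpa only [hx, if_true] using ite_eq_mem_stdSimplex ℝ y₀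
    · simp only [hx, if_false]
      refine ⟨fun y => div_nonneg (pr_nonneg hp _ _) (pr_nonneg hp _ _), ?_⟩
      rw [← Finset.sum_div, sum_pr_prodMk, div_self hx]
  · by_cases hx : pr p X x = 0
    · rw [hx, zero_mul]
      refine (pr_nonneg hp _ _).antisymm' ?_
      rw [← hx, ← sum_pr_prodMk p X Y x]
      exact Finset.single_le_sum (fun y _ => pr_nonneg hp _ _) (Finset.mem_univ y)
    · simp only [hx, if_false]
      rw [mul_div_cancel₀ _ hx]

end Probability

section Product

variable {ι α : Type*} [Fintype ι] [Fintype α]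

theorem prE_mul_and (ν : ι → ℝ) (q : α → ℝ) (A : ι → Prop) (B : α → Prop) :
    prE (fun ω : ι × α => ν ω.1 * q ω.2) (fun ω => A ω.1 ∧ B ω.2) = prE ν A * prE q B := by
  simp only [prE, Fintype.sum_mul_sum, Fintype.sum_prod_type]
  refine Finset.sum_congr rfl fun u _ => Finset.sum_congr rfl fun x _ => ?_
  by_cases hA : A u <;> by_cases hB : B x <;> simp [hA, hB]

theorem IsPMF.mul {ν : ι → ℝ} {q : α → ℝ} (hν : IsPMF ν) (hq : IsPMF q) :
    IsPMF (fun ω : ι × α => ν ω.1 * q ω.2) :=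
  ⟨fun _ => mul_nonneg (hν.1 _) (hq.1 _), by
    rw [Fintype.sum_prod_type, ← Fintype.sum_mul_sum, hν.2, hq.2, one_mul]⟩

theorem indepRV_fst_snd {ν : ι → ℝ} {q : α → ℝ} (hν : ∑ u, ν u = 1) (hq : ∑ x, q x = 1) :
    IndepRV (fun ω : ι × α => ν ω.1 * q ω.2) Prod.fst Prod.snd := by
  intro a b
  have hfst : pr (fun ω : ι × α => ν ω.1 * q ω.2) Prod.fst a = ν a := by
    rw [pr, prE_congr _ (F := fun ω => ω.1 = a ∧ True) (by simp),
      prE_mul_and ν q (· = a) fun _ => True, prE_eq_apply, prE_true, hq, mul_one]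
  have hsnd : pr (fun ω : ι × α => ν ω.1 * q ω.2) Prod.snd b = q b := by
    rw [pr, prE_congr _ (F := fun ω => True ∧ ω.2 = b) (by simp),
      prE_mul_and ν q (fun _ => True) (· = b), prE_eq_apply, prE_true, hν, one_mul]
  rw [prE_mul_and ν q (· = a) (· = b), prE_eq_apply, prE_eq_apply, hfst, hsnd]

end Product

section Equiv

variable {Ω Ω' : Type*} [Fintype Ω] [Fintype Ω'] (e : Ω' ≃ Ω) (p : Ω → ℝ)

theorem prE_comp_equiv (E : Ω → Prop) : prE (p ∘ e) (E ∘ e) = prE p E :=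
  e.sum_comp fun ω => if E ω then p ω else 0

theorem pr_comp_equiv {α : Type*} (X : Ω → α) (a : α) : pr (p ∘ e) (X ∘ e) a = pr p X a :=
  prE_comp_equiv e p fun ω => X ω = a

theorem ent_comp_equiv {α : Type*} [Fintype α] (X : Ω → α) : ent (p ∘ e) (X ∘ e) = ent p X := by
  simp only [ent, pr_comp_equiv]

theorem condEnt_comp_equiv {α β : Type*} [Fintype α] [Fintype β] (Y : Ω → β) (X : Ω → α) :
    condEnt (p ∘ e) (Y ∘ e) (X ∘ e) = condEnt p Y X :=
  congrArg₂ (· - ·) (ent_comp_equiv e p fun ω => (X ω, Y ω)) (ent_comp_equiv e p X)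

variable {p}

theorem IsPMF.comp_equiv (hp : IsPMF p) : IsPMF (p ∘ e) :=
  ⟨fun _ => hp.1 _, (e.sum_comp p).trans hp.2⟩

theorem IndepRV.comp_equiv {α β : Type*} {X : Ω → α} {Y : Ω → β} (h : IndepRV p X Y) :
    IndepRV (p ∘ e) (X ∘ e) (Y ∘ e) := fun a b => by
  rw [pr_comp_equiv, pr_comp_equiv, ← h]
  exact prE_comp_equiv e p fun ω => X ω = a ∧ Y ω = b

end Equiv

section Entropy

variable {Ω γ β : Type*} [Fintype Ω]

theorem pr_prodMk_comp (p : Ω → ℝ) (Z : Ω → γ) (g : γ → β) (c : γ) (b : β) :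
    pr p (fun ω => (Z ω, g (Z ω))) (c, b) = if g c = b then pr p Z c else 0 := by
  split_ifs with hb
  · exact prE_congr p fun ω => by simp only [Prod.mk.injEq, and_iff_left_iff_imp]; grind
  · rw [pr, prE_congr p (F := fun _ => False) (by grind)]
    simp [prE]

theorem ent_prodMk_comp [Fintype γ] [Fintype β] (p : Ω → ℝ) (Z : Ω → γ) (g : γ → β) :
    ent p (fun ω => (Z ω, g (Z ω))) = ent p Z := by
  simp only [ent, Fintype.sum_prod_type, pr_prodMk_comp]
  congr 1
  refine Finset.sum_congr rfl fun c _ => ?_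
  simp only [apply_ite (fun t : ℝ => t * Real.logb 2 t), Real.logb_zero, mul_zero]
  simp

theorem condEnt_comp_eq_zero [Fintype γ] [Fintype β] (p : Ω → ℝ) (Z : Ω → γ) (g : γ → β) :
    condEnt p (fun ω => g (Z ω)) Z = 0 :=
  sub_eq_zero.2 (ent_prodMk_comp p Z g)

end Entropy

/-- Functional Representation Lemma: on a possibly enlarged (finite) probability
space there is U independent of X with H(Y | U, X) = 0 and
|U| ≤ |X|(|Y| - 1) + 1, with (X, Y) keeping its joint distribution. -/
theorem stmt4 {Ω α β : Type*} [Fintype Ω] [Fintype α] [Fintype β]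
    (p : Ω → ℝ) (hp : IsPMF p) (X : Ω → α) (Y : Ω → β) :
    ∃ (N m : ℕ) (p' : Fin N → ℝ) (X' : Fin N → α) (Y' : Fin N → β)
      (U : Fin N → Fin m),
      IsPMF p' ∧
      (∀ c : α × β, pr p' (fun ω => (X' ω, Y' ω)) c = pr p (fun ω => (X ω, Y ω)) c) ∧
      IndepRV p' U X' ∧
      condEnt p' Y' (fun ω => (U ω, X' ω)) = 0 ∧
      m ≤ Fintype.card α * (Fintype.card β - 1) + 1 := by
  have : Nonempty β := hp.nonempty.map Y
  obtain ⟨r, hr, hXY⟩ := exists_condDistrib hp.1 X Y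
  obtain ⟨m, ν, f, hν, hf, hm⟩ := exists_common_pushforward_of_mem_stdSimplex r hr
  let q : Fin m × α → ℝ := fun ω => ν ω.1 * pr p X ω.2
  let g : Fin m × α → β := fun ω => f ω.1 ω.2
  have hjoint : ∀ x y, pr q (fun ω => (ω.2, g ω)) (x, y) = pr p X x * r x y := by
    intro x y
    rw [pr, prE_congr q (F := fun ω => f ω.1 x = y ∧ ω.2 = x) (by grind),
      prE_mul_and ν (pr p X) (fun u => f u x = y) (· = x), prE_eq_apply, mul_comm, ← hf]
    rfl
  let e := (Fintype.equivFin (Fin m × α)).symm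
  refine ⟨_, m, q ∘ e, Prod.snd ∘ e, g ∘ e, Prod.fst ∘ e, (hν.mul (hp.pr X)).comp_equiv e,
    fun ⟨x, y⟩ => ?_, (indepRV_fst_snd hν.2 (hp.pr X).2).comp_equiv e, ?_, hm⟩
  · exact (pr_comp_equiv e q _ _).trans ((hjoint x y).trans (hXY x y).symm)
  · exact (condEnt_comp_equiv e q g fun ω => (ω.1, ω.2)).trans
      (condEnt_comp_eq_zero q (fun ω => (ω.1, ω.2)) g)
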